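/- Let H be a Hopf *-algebra, A an H-module *-algebra (so (h▷a)* = S^{-1}(h*)▷a*), and (δ,σ) a modular pair in involution with a δ-invariant σ-trace τ: A → k. Then the Connes–Moscovici characteristic map χ_τ(h^1⊗...⊗h^n)(a_0,...,a_n) = τ(a_0 (h^1▷a_1)···(h^n▷a_n)) intertwines the involutions: w_n(χ_τ(h^1⊗...⊗h^n)) = χ_τ(σS^{-1}((h^n)*) ⊗ ... ⊗ σS^{-1}((h^1)*)). -/

import Mathlib

open TensorProduct

/- STATEMENT 8: Let H be a Hopf *-algebra, A an H-module *-algebra (so (h▷a)* = S⁻¹(h*)▷a*),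
and (δ,σ) a modular pair in involution with a δ-invariant σ-trace τ : A → k.  Then the
Connes–Moscovici characteristic map
  χ_τ(h^1⊗...⊗h^n)(a_0,...,a_n) = τ(a_0 (h^1▷a_1)···(h^n▷a_n))
intertwines the involutions:
  w_n(χ_τ(h^1⊗...⊗h^n)) = χ_τ(σS^{-1}((h^n)*) ⊗ ... ⊗ σS^{-1}((h^1)*)).
The identity is expressed on elementary tensors h^1⊗...⊗h^n, i.e. on tuples. -/

variable {k H A : Type*}

/-- The involution on algebra cochains: `(w_n φ)(a_0,...,a_n) = conj φ(a_0*, a_n*, ..., a_1*)`. -/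
noncomputable def cycW [Star k] [Star A] (n : ℕ)
    (φ : (Fin (n + 1) → A) → k) : (Fin (n + 1) → A) → k :=
  fun a => star (φ (fun j => star (a (-j))))

/-- The Connes–Moscovici characteristic map on elementary tensors:
`χ_τ(h^1⊗...⊗h^n)(a_0,...,a_n) = τ(a_0 (h^1▷a_1)···(h^n▷a_n))`. -/
noncomputable def chiCM [Ring A] (τ : A → k) (act : H → A → A) (n : ℕ)
    (h : Fin n → H) : (Fin (n + 1) → A) → k :=
  fun a => τ (a 0 * (List.ofFn fun i : Fin n => act (h i) (a i.succ)).prod)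

/-- The involution on `H^⊗n` (on elementary tensors):
`w_n(h^1⊗...⊗h^n) = σS⁻¹((h^n)*) ⊗ ... ⊗ σS⁻¹((h^1)*)`. -/
noncomputable def hopfWtup [Ring H] [Star H] (Sinv : H → H) (σ : H) (n : ℕ)
    (h : Fin n → H) : Fin n → H :=
  fun j => σ * Sinv (star (h (Fin.rev j)))

/-
Taking adjoints reverses the product and turns each `h ▷ a` into `S⁻¹(h*) ▷ a*`,
so `w_n(χ_τ(h))(a) = τ((S⁻¹(h^n*) ▷ a_1) ⋯ (S⁻¹(h^1*) ▷ a_n) · a_0)`. The σ-trace property moves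
`a_0` to the front at the cost of applying `σ` to the product, and since `σ` is grouplike it acts
multiplicatively, which prefixes every factor by `σ`.
-/

lemma star_prod_ofFn {M : Type*} [Monoid M] [StarMul M] {n : ℕ} (f : Fin n → M) :
    star (List.ofFn f).prod = (List.ofFn fun j => star (f j.rev)).prod := by
  induction n with
  | zero => simp
  | succ m ih =>
    rw [List.ofFn_succ, List.prod_cons, star_mul, ih, List.ofFn_succ' fun j => star (f j.rev)]
    simp [Fin.rev_last, Fin.rev_castSucc]

lemma MulHom.map_prod_ofFn_succ {M N : Type*} [Monoid M] [Monoid N] (φ : M →ₙ* N) {n : ℕ}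
    (f : Fin (n + 1) → M) : φ (List.ofFn f).prod = (List.ofFn (φ ∘ f)).prod := by
  induction n with
  | zero => simp
  | succ m ih =>
    rw [List.ofFn_succ, List.prod_cons, map_mul, ih, List.ofFn_succ (f := φ ∘ f), List.prod_cons]
    rfl

lemma Fin.neg_succ_rev {n : ℕ} (j : Fin n) : -(j.rev.succ) = (j.succ : Fin (n + 1)) := by
  grind

section CharacteristicMap

variable {act : H → A → A}

lemma act_mul_of_comul_eq_tmul [CommSemiring k] [Semiring H] [Algebra k H] [Semiring A]
    {comul : H →ₗ[k] H ⊗[k] H}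
    (hmodalg : ∀ (h : H) (a b : A) (ι : Type) (_ : Fintype ι) (u v : ι → H),
      comul h = ∑ j : ι, u j ⊗ₜ[k] v j →
        act h (a * b) = ∑ j : ι, act (u j) a * act (v j) b)
    {g : H} (hg : comul g = g ⊗ₜ[k] g) (a b : A) :
    act g (a * b) = act g a * act g b := by
  simpa using hmodalg g a b Unit inferInstance (fun _ => g) (fun _ => g) (by simp [hg])

lemma cycW_chiCM_apply [Star k] [Star H] [Ring A] [StarRing A] {τ : A → k} {Sinv : H → H}
    (hact_star : ∀ (h : H) (a : A), star (act h a) = act (Sinv (star h)) (star a))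
    (hτstar : ∀ a : A, star (τ a) = τ (star a)) {n : ℕ} (h : Fin n → H) (a : Fin (n + 1) → A) :
    cycW n (chiCM τ act n h) a =
      τ ((List.ofFn fun j => act (Sinv (star (h j.rev))) (a j.succ)).prod * a 0) := by
  simp only [cycW, chiCM, hτstar, star_mul, star_star, neg_zero, star_prod_ofFn, hact_star,
    Fin.neg_succ_rev]

lemma trace_prod_ofFn_mul [Mul H] [Monoid A] {τ : A → k} {σ : H}
    (hact_act : ∀ g h a, act g (act h a) = act (g * h) a)
    (hσmul : ∀ a b : A, act σ (a * b) = act σ a * act σ b)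
    (hτtrace : ∀ a b : A, τ (a * b) = τ (b * act σ a))
    {n : ℕ} (g : Fin n → H) (b : Fin n → A) (x : A) :
    τ ((List.ofFn fun j => act (g j) (b j)).prod * x) =
      τ (x * (List.ofFn fun j => act (σ * g j) (b j)).prod) := by
  cases n with
  | zero => simp
  | succ m =>
    have hσprod := (⟨act σ, hσmul⟩ : A →ₙ* A).map_prod_ofFn_succ fun j => act (g j) (b j)
    simp only [MulHom.coe_mk, Function.comp_def, hact_act] at hσprod
    rw [hτtrace, hσprod]

end CharacteristicMap

theorem chiCM_star_equivariant_general
    [Field k] [StarRing k]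
    [Ring H] [Algebra k H] [StarRing H]
    [Ring A] [StarRing A]
    (comul : H →ₗ[k] H ⊗[k] H) (Sinv : H → H) (σ : H)
    (act : H → A → A) (τ : A → k)
    -- (δ, σ) is a modular pair in involution, with σ self-adjoint:
    (hσgrouplike : comul σ = σ ⊗ₜ[k] σ)
    -- A is an H-module algebra:
    (hact_act : ∀ g h a, act g (act h a) = act (g * h) a)
    (hmodalg : ∀ (h : H) (a b : A) (ι : Type) (_ : Fintype ι) (u v : ι → H),
      comul h = ∑ j : ι, u j ⊗ₜ[k] v j →
        act h (a * b) = ∑ j : ι, act (u j) a * act (v j) b)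
    -- the *-action compatibility (h▷a)* = S⁻¹(h*)▷a*:
    (hact_star : ∀ (h : H) (a : A), star (act h a) = act (Sinv (star h)) (star a))
    -- τ is a δ-invariant σ-trace, compatible with the *-structures:
    (hτtrace : ∀ a b : A, τ (a * b) = τ (b * act σ a))
    (hτstar : ∀ a : A, star (τ a) = τ (star a))
    (n : ℕ) (h : Fin n → H) :
    cycW n (chiCM τ act n h) = chiCM τ act n (hopfWtup Sinv σ n h) := by
  funext a
  rw [cycW_chiCM_apply hact_star hτstar,
    trace_prod_ofFn_mul hact_act (act_mul_of_comul_eq_tmul hmodalg hσgrouplike) hτtrace]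
  rfl

theorem chiCM_star_equivariant
    [Field k] [StarRing k] [CharZero k]
    [Ring H] [Algebra k H] [StarRing H]
    [Ring A] [Algebra k A] [StarRing A]
    (comul : H →ₗ[k] H ⊗[k] H) (ε : H → k) (S Sinv : H → H) (δ : H → k) (σ : H)
    (act : H → A → A) (τ : A → k)
    -- Hopf *-algebra axioms (the ones involving the antipode and the *-structure):
    (hSinvS : ∀ h, Sinv (S h) = h) (hSSinv : ∀ h, S (Sinv h) = h)
    (hstarS : ∀ h : H, S (star h) = star (Sinv h))
    -- (δ, σ) is a modular pair in involution, with σ self-adjoint: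
    (hδmul : ∀ g h, δ (g * h) = δ g * δ h) (hδone : δ 1 = 1) (hδσ : δ σ = 1)
    (hσgrouplike : comul σ = σ ⊗ₜ[k] σ) (hστ : star σ = σ)
    -- A is an H-module algebra:
    (hact_act : ∀ g h a, act g (act h a) = act (g * h) a) (hact_one : ∀ a, act 1 a = a)
    (hact_unit : ∀ h : H, act h (1 : A) = algebraMap k A (ε h))
    (hmodalg : ∀ (h : H) (a b : A) (ι : Type) (_ : Fintype ι) (u v : ι → H),
      comul h = ∑ j : ι, u j ⊗ₜ[k] v j →
        act h (a * b) = ∑ j : ι, act (u j) a * act (v j) b)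
    -- the *-action compatibility (h▷a)* = S⁻¹(h*)▷a*:
    (hact_star : ∀ (h : H) (a : A), star (act h a) = act (Sinv (star h)) (star a))
    -- τ is a δ-invariant σ-trace, compatible with the *-structures:
    (hτδ : ∀ (h : H) (a : A), τ (act h a) = δ h * τ a)
    (hτtrace : ∀ a b : A, τ (a * b) = τ (b * act σ a))
    (hτstar : ∀ a : A, star (τ a) = τ (star a))
    (n : ℕ) (h : Fin n → H) :
    cycW n (chiCM τ act n h) = chiCM τ act n (hopfWtup Sinv σ n h) :=
  chiCM_star_equivariant_general comul Sinv σ act τ hσgrouplike hact_act hmodalg hact_star hτtrace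
    hτstar n h
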